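/- arXiv:1110.5378 — 4 statements merged into one kernel-verified Lean document; each statement's English description precedes it below -/
import Mathlib

section
/- Let n ≥ 1 and let a_# be a real number with n − 1/2 < a_# < n + 1/2. Set δ := (n − 1/2)^{5/2} √n |S^n| / (6 a_#³) and r := 2(n − 1/2)^{5/2} / (3 a_#^{3/2}). If ρ ∈ L¹(S^n, σ) satisfies ‖ρ − √(n/a_#)‖_{L¹(σ)} ≤ δ, then there exists a unique real number a with |a − a_#| ≤ r such that ∫_{S^n} (ρ(ω) − √(n/a)) dσ(ω) = 0. Moreover this a satisfies |a − a_#| ≤ C ‖ρ − √(n/a_#)‖_{L¹(σ)} and ‖ρ − √(n/a)‖_{L¹(σ)} ≤ C ‖ρ − √(n/a_#)‖_{L¹(σ)}, where C is a constant depending only on n. -/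
/-!
As the measure is finite, `∫ (ρ - c) dσ = |S^n| (⨍ ρ - c)` for every constant `c`, so the
orthogonality condition says exactly that `√(n/a)` is the mean `m` of `ρ`, i.e. `a = n / m²`,
and `|S^n| |m - √(n/a_#)| ≤ ‖ρ - √(n/a_#)‖_{L¹}`. The smallness `δ` keeps `m` within a sixth
of `√(n/a_#)`, where `c ↦ n / c²` is Lipschitz with constant `(78/25) a_#^{3/2} / √n`; this
yields both `|a - a_#| ≤ r` and the linear bound. Finally `‖ρ - m‖_{L¹} ≤ 2 ‖ρ - c‖_{L¹}` for
every constant `c`.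
-/

open MeasureTheory Metric Real

/-- The surface measure on the unit sphere `S^n ⊆ ℝ^{n+1}`. -/
noncomputable def sphereMeasure (n : ℕ) :
    Measure (sphere (0 : EuclideanSpace ℝ (Fin (n + 1))) 1) :=
  (volume : Measure (EuclideanSpace ℝ (Fin (n + 1)))).toSphere

instance (n : ℕ) : IsFiniteMeasure (sphereMeasure n) := by unfold sphereMeasure; infer_instance
instance (n : ℕ) : NeZero (sphereMeasure n) :=
  have : Nonempty (sphere (0 : EuclideanSpace ℝ (Fin (n + 1))) 1) :=
    (NormedSpace.sphere_nonempty.mpr zero_le_one).to_subtype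
  by unfold sphereMeasure; infer_instance

section Average

variable {α : Type*} [MeasurableSpace α] {μ : Measure α} [IsFiniteMeasure μ] {ρ : α → ℝ}

theorem integral_sub_const_eq_measureReal_mul (hρ : Integrable ρ μ) (c : ℝ) :
    ∫ x, (ρ x - c) ∂μ = μ.real Set.univ * (⨍ x, ρ x ∂μ - c) := by
  rw [integral_sub hρ (integrable_const c), integral_const, ← measure_smul_average, smul_eq_mul,
    smul_eq_mul, mul_sub]

theorem integral_sub_const_eq_zero_iff [NeZero μ] (hρ : Integrable ρ μ) (c : ℝ) :
    ∫ x, (ρ x - c) ∂μ = 0 ↔ c = ⨍ x, ρ x ∂μ := by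
  rw [integral_sub_const_eq_measureReal_mul hρ, mul_eq_zero, sub_eq_zero,
    or_iff_right measureReal_univ_pos.ne', eq_comm]

theorem measureReal_mul_abs_average_sub_le (hρ : Integrable ρ μ) (c : ℝ) :
    μ.real Set.univ * |⨍ x, ρ x ∂μ - c| ≤ ∫ x, |ρ x - c| ∂μ := by
  calc μ.real Set.univ * |⨍ x, ρ x ∂μ - c| = |∫ x, (ρ x - c) ∂μ| := by
        rw [integral_sub_const_eq_measureReal_mul hρ, abs_mul, abs_of_nonneg measureReal_nonneg]
    _ ≤ ∫ x, |ρ x - c| ∂μ := abs_integral_le_integral_abs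

theorem integral_abs_sub_average_le (hρ : Integrable ρ μ) (c : ℝ) :
    ∫ x, |ρ x - ⨍ y, ρ y ∂μ| ∂μ ≤ 2 * ∫ x, |ρ x - c| ∂μ := by
  have hρc : Integrable (fun x ↦ |ρ x - c|) μ := (hρ.sub (integrable_const c)).abs
  calc ∫ x, |ρ x - ⨍ y, ρ y ∂μ| ∂μ ≤ ∫ x, (|ρ x - c| + |c - ⨍ y, ρ y ∂μ|) ∂μ :=
        integral_mono (hρ.sub (integrable_const _)).abs (hρc.add (integrable_const _))
          fun x ↦ abs_sub_le _ _ _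
    _ = ∫ x, |ρ x - c| ∂μ + μ.real Set.univ * |⨍ y, ρ y ∂μ - c| := by
        rw [integral_add hρc (integrable_const _), integral_const, smul_eq_mul, abs_sub_comm]
    _ ≤ 2 * ∫ x, |ρ x - c| ∂μ := by linarith [measureReal_mul_abs_average_sub_le hρ c]

end Average

theorem sqrt_div_eq_iff {n a m : ℝ} (ha : a ≠ 0) (hm : 0 < m) :
    √(n / a) = m ↔ a = n / m ^ 2 := by
  rw [sqrt_eq_iff_mul_self_eq_of_pos hm, eq_div_iff ha, eq_div_iff (by positivity)]
  constructor <;> intro h <;> linarith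

/-- The constant is `(13/6) / (5/6)²`, from `m + w ≤ 13/6 * w` and `5/6 * w ≤ m`. -/
theorem abs_div_sq_sub_div_sq_le {c m w : ℝ} (hc : 0 ≤ c) (hw : 0 < w) (hm : |m - w| ≤ w / 6) :
    |c / m ^ 2 - c / w ^ 2| ≤ 78 / 25 * c * |m - w| / w ^ 3 := by
  obtain ⟨hm₁, hm₂⟩ := abs_le.mp hm
  have hm0 : 0 < m := by linarith
  have hsq : 25 / 36 * w ^ 2 ≤ m ^ 2 := by nlinarith
  calc |c / m ^ 2 - c / w ^ 2| = c * (|m - w| * (m + w)) / (m ^ 2 * w ^ 2) := by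
        rw [show c / m ^ 2 - c / w ^ 2 = c * ((w - m) * (m + w)) / (m ^ 2 * w ^ 2) by
          field_simp; ring, abs_div, abs_mul, abs_mul, abs_of_nonneg hc, abs_sub_comm,
          abs_of_pos (by linarith : 0 < m + w), abs_of_pos (by positivity : 0 < m ^ 2 * w ^ 2)]
    _ ≤ c * (|m - w| * (13 / 6 * w)) / (25 / 36 * w ^ 2 * w ^ 2) := by gcongr; linarith
    _ = 78 / 25 * c * |m - w| / w ^ 3 := by field_simp; ring

theorem abs_div_sq_sub_le {n x m : ℝ} (hn : 0 < n) (hx : 0 < x)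
    (hm : |m - √(n / x)| ≤ √(n / x) / 6) :
    |n / m ^ 2 - x| ≤ 78 / 25 * x ^ ((3 : ℝ) / 2) / √n * |m - √(n / x)| := by
  have key := abs_div_sq_sub_div_sq_le hn.le (sqrt_pos.2 (div_pos hn hx)) hm
  rw [sq_sqrt (div_pos hn hx).le, div_div_cancel₀ hn.ne'] at key
  convert key using 1
  have := sqrt_pos.2 hx
  rw [show (3 : ℝ) / 2 = (3 : ℕ) / 2 by norm_num, rpow_div_two_eq_sqrt _ hx.le, rpow_natCast,
    sqrt_div hn.le, div_pow]
  field_simp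
  rw [sq_sqrt hn.le, mul_comm]

section Tolerance

variable {b x : ℝ}

theorem rpow_five_halves_mul_sqrt_div_le (n : ℝ) (hb : 0 ≤ b) (hbx : b < x) :
    b ^ ((5 : ℝ) / 2) * √n / (6 * x ^ 3) ≤ √(n / x) / 6 := by
  have hx : 0 < x := hb.trans_lt hbx
  have hs : 0 < √x := sqrt_pos.2 hx
  calc b ^ ((5 : ℝ) / 2) * √n / (6 * x ^ 3) ≤ x ^ ((5 : ℝ) / 2) * √n / (6 * x ^ 3) := by
        gcongr
    _ = √(n / x) / 6 := by
        rw [show (5 : ℝ) / 2 = (5 : ℕ) / 2 by norm_num, rpow_div_two_eq_sqrt _ hx.le, rpow_natCast,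
          sqrt_div' n hx.le, show x ^ 3 = √x ^ 6 by rw [pow_mul √x 2 3, sq_sqrt hx.le]]
        field_simp

theorem rpow_three_halves_div_sqrt_mul_le {n : ℝ} (hn : 0 < n) (hb : 0 ≤ b) (hx : 0 < x) :
    78 / 25 * x ^ ((3 : ℝ) / 2) / √n * (b ^ ((5 : ℝ) / 2) * √n / (6 * x ^ 3)) ≤
      2 * b ^ ((5 : ℝ) / 2) / (3 * x ^ ((3 : ℝ) / 2)) := by
  have hxp : 0 < x ^ ((3 : ℝ) / 2) := rpow_pos_of_pos hx _
  have hB : 0 ≤ b ^ ((5 : ℝ) / 2) := rpow_nonneg hb _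
  rw [show x ^ 3 = (x ^ ((3 : ℝ) / 2)) ^ 2 by
    rw [← rpow_natCast (x ^ _), ← rpow_mul hx.le, ← rpow_natCast]; norm_num]
  have := sqrt_pos.2 hn
  field_simp
  linarith

theorem two_mul_rpow_five_halves_div_lt (hb : 0 ≤ b) (hbx : b < x) :
    2 * b ^ ((5 : ℝ) / 2) / (3 * x ^ ((3 : ℝ) / 2)) < x := by
  have hx : 0 < x := hb.trans_lt hbx
  have hsplit : b ^ ((5 : ℝ) / 2) = b ^ ((3 : ℝ) / 2) * b := by
    rw [← rpow_add_one' hb (by norm_num)]; norm_num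
  have hp : b ^ ((3 : ℝ) / 2) ≤ x ^ ((3 : ℝ) / 2) := rpow_le_rpow hb hbx.le (by norm_num)
  have hxp : 0 < x ^ ((3 : ℝ) / 2) := rpow_pos_of_pos hx _
  rw [div_lt_iff₀ (by positivity), hsplit]
  nlinarith [rpow_nonneg hb ((3 : ℝ) / 2)]

end Tolerance

/-- quantitative orthogonal decomposition of the radial graph
function.  If `‖ρ − √(n/a_#)‖_{L¹} ≤ δ := (n−1/2)^{5/2}√n |S^n|/(6 a_#³)` for
some `n − 1/2 < a_# < n + 1/2`, then there is a unique `a` with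
`|a − a_#| ≤ r := 2(n−1/2)^{5/2}/(3 a_#^{3/2})` such that
`∫ (ρ − √(n/a)) dσ = 0`; moreover `|a − a_#| ≲ ‖ρ − √(n/a_#)‖_{L¹}` and
`‖ρ − √(n/a)‖_{L¹} ≲ ‖ρ − √(n/a_#)‖_{L¹}`, with a constant depending only
on `n`. -/
theorem exists_unique_scaling_parameter (n : ℕ) (hn : 1 ≤ n) :
    ∃ C : ℝ, 0 < C ∧
      ∀ (aSharp : ℝ), (n : ℝ) - 1 / 2 < aSharp → aSharp < (n : ℝ) + 1 / 2 →
      ∀ ρ : sphere (0 : EuclideanSpace ℝ (Fin (n + 1))) 1 → ℝ,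
        Integrable ρ (sphereMeasure n) →
        (∫ ω, |ρ ω - Real.sqrt ((n : ℝ) / aSharp)| ∂(sphereMeasure n)) ≤
          ((n : ℝ) - 1 / 2) ^ ((5 : ℝ) / 2) * Real.sqrt n *
            ((sphereMeasure n) Set.univ).toReal / (6 * aSharp ^ 3) →
        ∃ a : ℝ,
          (|a - aSharp| ≤ 2 * ((n : ℝ) - 1 / 2) ^ ((5 : ℝ) / 2) /
              (3 * aSharp ^ ((3 : ℝ) / 2)) ∧
            (∫ ω, (ρ ω - Real.sqrt ((n : ℝ) / a)) ∂(sphereMeasure n)) = 0) ∧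
          (∀ a' : ℝ,
            |a' - aSharp| ≤ 2 * ((n : ℝ) - 1 / 2) ^ ((5 : ℝ) / 2) /
                (3 * aSharp ^ ((3 : ℝ) / 2)) →
            (∫ ω, (ρ ω - Real.sqrt ((n : ℝ) / a')) ∂(sphereMeasure n)) = 0 →
            a' = a) ∧
          |a - aSharp| ≤
            C * ∫ ω, |ρ ω - Real.sqrt ((n : ℝ) / aSharp)| ∂(sphereMeasure n) ∧
          (∫ ω, |ρ ω - Real.sqrt ((n : ℝ) / a)| ∂(sphereMeasure n)) ≤
            C * ∫ ω, |ρ ω - Real.sqrt ((n : ℝ) / aSharp)| ∂(sphereMeasure n) := by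
  have hb : (0 : ℝ) < n - 1 / 2 := by linarith [show (1 : ℝ) ≤ n by exact_mod_cast hn]
  set V := (sphereMeasure n).real Set.univ
  have hV : 0 < V := measureReal_univ_pos
  set K := 78 / 25 * ((n : ℝ) + 1 / 2) ^ ((3 : ℝ) / 2) / (√n * V)
  refine ⟨K + 2, by positivity, fun x hx₁ hx₂ ρ hρ hE ↦ ?_⟩
  have hx : 0 < x := hb.trans hx₁
  set w := √(n / x)
  set m := ⨍ ω, ρ ω ∂sphereMeasure n
  set E := ∫ ω, |ρ ω - w| ∂sphereMeasure n
  have hE₀ : 0 ≤ E := integral_nonneg fun _ ↦ abs_nonneg _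
  have hmE : |m - w| ≤ E / V := (le_div_iff₀' hV).2 (measureReal_mul_abs_average_sub_le hρ w)
  have hmη : |m - w| ≤ ((n : ℝ) - 1 / 2) ^ ((5 : ℝ) / 2) * √n / (6 * x ^ 3) := by
    refine hmE.trans ((div_le_iff₀ hV).2 (hE.trans_eq ?_))
    rw [← measureReal_def]; ring
  have hmw : |m - w| ≤ w / 6 := hmη.trans (rpow_five_halves_mul_sqrt_div_le _ hb.le hx₁)
  have hm : 0 < m := by
    have hw : 0 < w := sqrt_pos.2 (div_pos (by linarith) hx)
    linarith [(abs_le.1 hmw).1]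
  have ha := abs_div_sq_sub_le (by linarith) hx hmw
  have hsqrt : √(n / (n / m ^ 2)) = m := (sqrt_div_eq_iff (by positivity) hm).2 rfl
  refine ⟨n / m ^ 2, ⟨?_, ?_⟩, fun a' ha' h0 ↦ ?_, ?_, ?_⟩
  · exact ha.trans ((mul_le_mul_of_nonneg_left hmη (by positivity)).trans
      (rpow_three_halves_div_sqrt_mul_le (by linarith) hb.le hx))
  · exact (integral_sub_const_eq_zero_iff hρ _).2 hsqrt
  · have ha'₀ : 0 < a' := by
      linarith [(abs_lt.1 (ha'.trans_lt (two_mul_rpow_five_halves_div_lt hb.le hx₁))).1]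
    exact (sqrt_div_eq_iff ha'₀.ne' hm).1 ((integral_sub_const_eq_zero_iff hρ _).1 h0)
  · calc |n / m ^ 2 - x| ≤ 78 / 25 * x ^ ((3 : ℝ) / 2) / √n * (E / V) :=
          ha.trans (mul_le_mul_of_nonneg_left hmE (by positivity))
      _ ≤ 78 / 25 * ((n : ℝ) + 1 / 2) ^ ((3 : ℝ) / 2) / √n * (E / V) := by
          gcongr
      _ = K * E := by ring
      _ ≤ (K + 2) * E := by gcongr; norm_num
  · rw [hsqrt]
    exact (integral_abs_sub_average_le hρ w).trans (by gcongr; linarith [show 0 ≤ K by positivity])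
end

section
/- Let n ≥ 1, λ₀ > 0, and let ã : [0, ∞) → [n − 1/2, n + 1/2] be continuous; let t_* be the unique positive time with λ₀² = 2∫₀^{t_*} ã(s) ds, and set λ(t) := (λ₀² − 2∫₀^t ã(s) ds)^{1/2} and τ(t) := ∫₀^t λ(s)^{-2} ds for t ∈ [0, t_*). Assume there are constants c > 0, C ≥ 0 and a_* ∈ [n − 1/2, n + 1/2] with |ã(t) − a_*| ≤ C e^{−c τ(t)} for all t ∈ [0, t_*). Then there exists a constant C₂ such that e^{−c τ(t)} ≤ C₂ (t_* − t)^{c/(2a_*)} for all t ∈ [0, t_*). -/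
/-!
Write `λ(s)² = 2∫ₛ^{t_*} ã`. Since `ã ≤ n + 1/2`, `λ(s)² ≤ (2n + 1)(t_* − s)`, so `τ(t)` grows
at least like `(2n + 1)⁻¹ log (t_* / (t_* − t))`; this gives a first, weaker power decay
`e^{−cτ(t)} ≲ (t_* − t)^α`. Fed back into the decay hypothesis, it yields
`ã(s) ≤ a_* + k (t_* − s)^α`, hence `λ(s)² ≤ 2a_*(t_* − s) + K (t_* − s)^{α+1}`.
By `(x + y)⁻¹ ≥ x⁻¹ − y / x²` the correction changes `λ(s)^{-2}` by at most a multiple of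
`(t_* − s)^{α−1}`, which is integrable up to `t_*`, so
`τ(t) ≥ (2a_*)⁻¹ log (t_* / (t_* − t)) − const`: this is the claimed power law.
-/

open MeasureTheory Set Real

lemma inv_sub_div_sq_le_inv_add {x y : ℝ} (hx : 0 < x) (hy : 0 ≤ y) :
    x⁻¹ - y / x ^ 2 ≤ (x + y)⁻¹ := by
  rw [show x⁻¹ - y / x ^ 2 = (x - y) / x ^ 2 by field_simp, inv_eq_one_div,
    div_le_div_iff₀ (by positivity) (by positivity)]
  nlinarith

lemma integral_le_mul_sub_of_le {f : ℝ → ℝ} {a b M : ℝ} (hab : a ≤ b)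
    (hf : IntervalIntegrable f volume a b) (h : ∀ x ∈ Icc a b, f x ≤ M) :
    ∫ x in a..b, f x ≤ M * (b - a) := by
  simpa [mul_comm] using intervalIntegral.integral_mono_on hab hf intervalIntegrable_const h

lemma integral_le_of_le_add_rpow {f : ℝ → ℝ} {s T a₀ k α : ℝ} (hsT : s ≤ T) (hα : 0 ≤ α)
    (hf : IntervalIntegrable f volume s T) (h : ∀ u ∈ Ioo s T, f u ≤ a₀ + k * (T - u) ^ α) :
    ∫ u in s..T, f u ≤ a₀ * (T - s) + k / (α + 1) * (T - s) ^ (α + 1) := by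
  have hpow : IntervalIntegrable (fun u => (T - u) ^ α) volume s T :=
    ((continuous_const.sub continuous_id).rpow_const fun _ => Or.inr hα).intervalIntegrable _ _
  calc ∫ u in s..T, f u ≤ ∫ u in s..T, (a₀ + k * (T - u) ^ α) :=
        intervalIntegral.integral_mono_on_of_le_Ioo hsT hf
          (intervalIntegrable_const.add (hpow.const_mul k)) h
    _ = a₀ * (T - s) + k / (α + 1) * (T - s) ^ (α + 1) := by
        rw [intervalIntegral.integral_add intervalIntegrable_const (hpow.const_mul k),
          intervalIntegral.integral_const, intervalIntegral.integral_const_mul,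
          intervalIntegral.integral_comp_sub_left (fun x => x ^ α), sub_self,
          integral_rpow (Or.inl (by linarith)), zero_rpow (by positivity : α + 1 ≠ 0), smul_eq_mul]
        ring

lemma exp_neg_mul_le_of_log_div_sub_le {c κ K τ x y : ℝ} (hc : 0 ≤ c) (hx : 0 < x) (hy : 0 < y)
    (h : κ * log (x / y) - K ≤ τ) :
    exp (-c * τ) ≤ exp (c * K) * x ^ (-(c * κ)) * y ^ (c * κ) := by
  rw [rpow_def_of_pos hx, rpow_def_of_pos hy, ← exp_add, ← exp_add, exp_le_exp]
  rw [log_div hx.ne' hy.ne'] at h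
  nlinarith [mul_le_mul_of_nonneg_left h hc]

lemma inv_mul_log_div_sub_le_integral_inv {L : ℝ → ℝ} {T t b K α : ℝ} (ht : 0 ≤ t) (htT : t < T)
    (hb : 0 < b) (hK : 0 ≤ K) (hα : 0 < α) (hLc : ContinuousOn L (Icc 0 t))
    (hLpos : ∀ s ∈ Icc 0 t, 0 < L s)
    (hLle : ∀ s ∈ Icc 0 t, L s ≤ b * (T - s) + K * (T - s) ^ (α + 1)) :
    b⁻¹ * log (T / (T - t)) - K / (b ^ 2 * α) * T ^ α ≤ ∫ s in (0 : ℝ)..t, (L s)⁻¹ := by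
  have hTs : ∀ s ∈ Icc 0 t, 0 < T - s := fun s hs => by linarith [hs.2]
  have hpointwise : ∀ s ∈ Icc 0 t,
      b⁻¹ * (T - s)⁻¹ - K / b ^ 2 * (T - s) ^ (α - 1) ≤ (L s)⁻¹ := by
    intro s hs
    have hTs := hTs s hs
    calc b⁻¹ * (T - s)⁻¹ - K / b ^ 2 * (T - s) ^ (α - 1)
        = (b * (T - s))⁻¹ - K * (T - s) ^ (α + 1) / (b * (T - s)) ^ 2 := by
          rw [rpow_add hTs, rpow_sub hTs, rpow_one]
          field_simp
      _ ≤ (b * (T - s) + K * (T - s) ^ (α + 1))⁻¹ :=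
          inv_sub_div_sq_le_inv_add (by positivity) (by positivity)
      _ ≤ (L s)⁻¹ := inv_anti₀ (hLpos s hs) (hLle s hs)
  have hlog : IntervalIntegrable (fun s => b⁻¹ * (T - s)⁻¹) volume 0 t :=
    (continuousOn_const.mul ((continuousOn_const.sub continuousOn_id).inv₀
      fun s hs => (hTs s hs).ne')).intervalIntegrable_of_Icc ht
  have hpow : IntervalIntegrable (fun s => K / b ^ 2 * (T - s) ^ (α - 1)) volume 0 t :=
    (continuousOn_const.mul ((continuousOn_const.sub continuousOn_id).rpow_const
      fun s hs => Or.inl (hTs s hs).ne')).intervalIntegrable_of_Icc ht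
  have hLint : IntervalIntegrable (fun s => (L s)⁻¹) volume 0 t :=
    (hLc.inv₀ fun s hs => (hLpos s hs).ne').intervalIntegrable_of_Icc ht
  have hlog_eq : ∫ s in (0 : ℝ)..t, b⁻¹ * (T - s)⁻¹ = b⁻¹ * log (T / (T - t)) := by
    rw [intervalIntegral.integral_const_mul,
      intervalIntegral.integral_comp_sub_left (fun x => x⁻¹), sub_zero,
      integral_inv_of_pos (by linarith) (by linarith)]
  have hpow_le : ∫ s in (0 : ℝ)..t, K / b ^ 2 * (T - s) ^ (α - 1) ≤ K / (b ^ 2 * α) * T ^ α := by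
    rw [intervalIntegral.integral_const_mul,
      intervalIntegral.integral_comp_sub_left (fun x => x ^ (α - 1)), sub_zero,
      integral_rpow (Or.inl (by linarith)), sub_add_cancel]
    calc K / b ^ 2 * ((T ^ α - (T - t) ^ α) / α) ≤ K / b ^ 2 * (T ^ α / α) := by
          gcongr
          exact sub_le_self _ (rpow_nonneg (by linarith) α)
      _ = K / (b ^ 2 * α) * T ^ α := by ring
  calc b⁻¹ * log (T / (T - t)) - K / (b ^ 2 * α) * T ^ α
      ≤ (∫ s in (0 : ℝ)..t, b⁻¹ * (T - s)⁻¹) -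
          ∫ s in (0 : ℝ)..t, K / b ^ 2 * (T - s) ^ (α - 1) := by
        linarith
    _ = ∫ s in (0 : ℝ)..t, (b⁻¹ * (T - s)⁻¹ - K / b ^ 2 * (T - s) ^ (α - 1)) :=
        (intervalIntegral.integral_sub hlog hpow).symm
    _ ≤ ∫ s in (0 : ℝ)..t, (L s)⁻¹ :=
        intervalIntegral.integral_mono_on ht (hlog.sub hpow) hLint hpointwise

/-- `τ(t)`, with `λ(s)²` written as `2 ∫ₛ^T a`. -/
noncomputable def rescaledTime (a : ℝ → ℝ) (T t : ℝ) : ℝ :=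
  ∫ s in (0 : ℝ)..t, (2 * ∫ u in s..T, a u)⁻¹

section RescaledTime

variable {a : ℝ → ℝ} {T M c t : ℝ}

lemma integral_pos_of_pos_on_Icc (ha : ContinuousOn a (Icc 0 T))
    (hpos : ∀ s ∈ Icc 0 T, 0 < a s) {s : ℝ} (hs : s ∈ Ico 0 T) : 0 < ∫ u in s..T, a u :=
  intervalIntegral.intervalIntegral_pos_of_pos_on
    ((ha.mono (Icc_subset_Icc_left hs.1)).intervalIntegrable_of_Icc hs.2.le)
    (fun u hu => hpos u ⟨hs.1.trans hu.1.le, hu.2.le⟩) hs.2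

lemma inv_mul_log_div_sub_le_rescaledTime (ha : ContinuousOn a (Icc 0 T))
    (hpos : ∀ s ∈ Icc 0 T, 0 < a s) (ht : t ∈ Ico 0 T) {b K α : ℝ} (hb : 0 < b) (hK : 0 ≤ K)
    (hα : 0 < α) (hle : ∀ s ∈ Icc 0 t, 2 * ∫ u in s..T, a u ≤ b * (T - s) + K * (T - s) ^ (α + 1)) :
    b⁻¹ * log (T / (T - t)) - K / (b ^ 2 * α) * T ^ α ≤ rescaledTime a T t := by
  have hT : 0 ≤ T := ht.1.trans ht.2.le
  have hcont : ContinuousOn (fun s => ∫ u in s..T, a u) (Icc 0 T) := by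
    have := intervalIntegral.continuousOn_primitive_interval_left (f := a) (μ := volume)
      (by rw [uIcc_of_le hT]; exact ha.integrableOn_Icc)
    rwa [uIcc_of_le hT] at this
  refine inv_mul_log_div_sub_le_integral_inv ht.1 ht.2 hb hK hα
    ((continuousOn_const.mul hcont).mono (Icc_subset_Icc_right ht.2.le)) (fun s hs => ?_) hle
  exact mul_pos two_pos (integral_pos_of_pos_on_Icc ha hpos ⟨hs.1, hs.2.trans_lt ht.2⟩)

lemma exp_neg_mul_rescaledTime_le (ha : ContinuousOn a (Icc 0 T))
    (hpos : ∀ s ∈ Icc 0 T, 0 < a s) (hM : ∀ s ∈ Icc 0 T, a s ≤ M) (hc : 0 ≤ c)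
    (ht : t ∈ Ico 0 T) :
    exp (-c * rescaledTime a T t) ≤ T ^ (-(c / (2 * M))) * (T - t) ^ (c / (2 * M)) := by
  have h0 : (0 : ℝ) ∈ Icc 0 T := ⟨le_rfl, ht.1.trans ht.2.le⟩
  have hM0 : 0 < M := (hpos 0 h0).trans_le (hM 0 h0)
  have hτ := inv_mul_log_div_sub_le_rescaledTime ha hpos ht (by positivity : 0 < 2 * M) le_rfl
    one_pos fun s hs => by
      have hsT : s ≤ T := hs.2.trans ht.2.le
      have := integral_le_mul_sub_of_le hsT
        ((ha.mono (Icc_subset_Icc_left hs.1)).intervalIntegrable_of_Icc hsT)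
        fun u hu => hM u ⟨hs.1.trans hu.1, hu.2⟩
      linarith
  simpa [div_eq_mul_inv] using
    exp_neg_mul_le_of_log_div_sub_le hc (by linarith [ht.1, ht.2]) (by linarith [ht.2]) hτ

theorem exists_exp_neg_mul_rescaledTime_le_rpow (ha : ContinuousOn a (Icc 0 T))
    (hpos : ∀ s ∈ Icc 0 T, 0 < a s) (hM : ∀ s ∈ Icc 0 T, a s ≤ M) (hT : 0 < T) {a₀ C : ℝ}
    (ha₀ : 0 < a₀) (hc : 0 < c) (hC : 0 ≤ C)
    (hdecay : ∀ t ∈ Ico 0 T, a t - a₀ ≤ C * exp (-c * rescaledTime a T t)) :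
    ∃ C₂, ∀ t ∈ Ico 0 T, exp (-c * rescaledTime a T t) ≤ C₂ * (T - t) ^ (c / (2 * a₀)) := by
  have h0 : (0 : ℝ) ∈ Icc 0 T := ⟨le_rfl, hT.le⟩
  have hM0 : 0 < M := (hpos 0 h0).trans_le (hM 0 h0)
  set α := c / (2 * M)
  have hα : 0 < α := by positivity
  set k := C * T ^ (-α)
  have hk : 0 ≤ k := by positivity
  have hle : ∀ s ∈ Ico 0 T, 2 * ∫ u in s..T, a u ≤
      2 * a₀ * (T - s) + 2 * k / (α + 1) * (T - s) ^ (α + 1) := by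
    intro s hs
    have := integral_le_of_le_add_rpow hs.2.le hα.le
      ((ha.mono (Icc_subset_Icc_left hs.1)).intervalIntegrable_of_Icc hs.2.le)
      fun u hu => by
        have hu' : u ∈ Ico 0 T := ⟨hs.1.trans hu.1.le, hu.2⟩
        calc a u ≤ a₀ + C * exp (-c * rescaledTime a T u) := by linarith [hdecay u hu']
          _ ≤ a₀ + C * (T ^ (-α) * (T - u) ^ α) := by
              gcongr
              exact exp_neg_mul_rescaledTime_le ha hpos hM hc.le hu'
          _ = a₀ + k * (T - u) ^ α := by ring
    calc 2 * ∫ u in s..T, a u ≤ 2 * (a₀ * (T - s) + k / (α + 1) * (T - s) ^ (α + 1)) := by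
          linarith
      _ = 2 * a₀ * (T - s) + 2 * k / (α + 1) * (T - s) ^ (α + 1) := by ring
  refine ⟨exp (c * (2 * k / (α + 1) / ((2 * a₀) ^ 2 * α) * T ^ α)) * T ^ (-(c / (2 * a₀))),
    fun t ht => ?_⟩
  have hτ := inv_mul_log_div_sub_le_rescaledTime ha hpos ht (by positivity : 0 < 2 * a₀)
    (by positivity) hα fun s hs => hle s ⟨hs.1, hs.2.trans_lt ht.2⟩
  simpa [div_eq_mul_inv] using
    exp_neg_mul_le_of_log_div_sub_le hc.le hT (by linarith [ht.2]) hτ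

end RescaledTime

theorem exp_decay_to_power_law_general (n : ℕ) (hn : 1 ≤ n) (lam₀ : ℝ)
    (atil : ℝ → ℝ) (hcont : ContinuousOn atil (Ici 0))
    (hrange : ∀ t ∈ Ici (0 : ℝ), atil t ∈ Icc ((n : ℝ) - 1 / 2) ((n : ℝ) + 1 / 2))
    (tstar : ℝ) (htstar : 0 < tstar)
    (hcollapse : lam₀ ^ 2 = 2 * ∫ s in (0 : ℝ)..tstar, atil s)
    (c C astar : ℝ) (hc : 0 < c) (hC : 0 ≤ C)
    (hastar : astar ∈ Icc ((n : ℝ) - 1 / 2) ((n : ℝ) + 1 / 2))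
    (hdecay : ∀ t ∈ Ico (0 : ℝ) tstar,
      |atil t - astar| ≤
        C * Real.exp (-c * ∫ s in (0 : ℝ)..t,
          (Real.sqrt (lam₀ ^ 2 - 2 * ∫ u in (0 : ℝ)..s, atil u) ^ 2)⁻¹)) :
    ∃ C₂ : ℝ, ∀ t ∈ Ico (0 : ℝ) tstar,
      Real.exp (-c * ∫ s in (0 : ℝ)..t,
          (Real.sqrt (lam₀ ^ 2 - 2 * ∫ u in (0 : ℝ)..s, atil u) ^ 2)⁻¹) ≤
        C₂ * (tstar - t) ^ (c / (2 * astar)) := by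
  have hmin : (0 : ℝ) < n - 1 / 2 := by
    have : (1 : ℝ) ≤ n := by exact_mod_cast hn
    linarith
  have hcont' : ContinuousOn atil (Icc 0 tstar) := hcont.mono Icc_subset_Ici_self
  have hpos : ∀ s ∈ Icc 0 tstar, 0 < atil s := fun s hs => hmin.trans_le (hrange s hs.1).1
  have hτ : ∀ t ∈ Ico 0 tstar, ∫ s in (0 : ℝ)..t,
      (sqrt (lam₀ ^ 2 - 2 * ∫ u in (0 : ℝ)..s, atil u) ^ 2)⁻¹ = rescaledTime atil tstar t := by
    intro t ht
    refine intervalIntegral.integral_congr fun s hs => ?_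
    rw [uIcc_of_le ht.1] at hs
    have hs' : s ∈ Ico 0 tstar := ⟨hs.1, hs.2.trans_lt ht.2⟩
    have hint : ∀ x ∈ Icc 0 tstar, IntervalIntegrable atil volume 0 x := fun x hx =>
      (hcont'.mono (Icc_subset_Icc_right hx.2)).intervalIntegrable_of_Icc hx.1
    rw [hcollapse, ← mul_sub, intervalIntegral.integral_interval_sub_left
      (hint tstar ⟨htstar.le, le_rfl⟩) (hint s ⟨hs'.1, hs'.2.le⟩),
      sq_sqrt (mul_pos two_pos (integral_pos_of_pos_on_Icc hcont' hpos hs')).le]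
  obtain ⟨C₂, hC₂⟩ := exists_exp_neg_mul_rescaledTime_le_rpow hcont' hpos
    (fun s hs => (hrange s hs.1).2) htstar (hmin.trans_le hastar.1) hc hC
    fun t ht => by rw [← hτ t ht]; exact (le_abs_self _).trans (hdecay t ht)
  exact ⟨C₂, fun t ht => by rw [hτ t ht]; exact hC₂ t ht⟩

/-- conversion of exponential decay in the rescaled time
`τ(t) = ∫₀^t λ(s)^{-2} ds` into a power of `(t_* − t)`:  if
`|ã(t) − a_*| ≤ C e^{−c τ(t)}` on `[0, t_*)`, then
`e^{−c τ(t)} ≤ C₂ (t_* − t)^{c/(2a_*)}` on `[0, t_*)`. -/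
theorem exp_decay_to_power_law (n : ℕ) (hn : 1 ≤ n) (lam₀ : ℝ) (hlam₀ : 0 < lam₀)
    (atil : ℝ → ℝ) (hcont : ContinuousOn atil (Ici 0))
    (hrange : ∀ t ∈ Ici (0 : ℝ), atil t ∈ Icc ((n : ℝ) - 1 / 2) ((n : ℝ) + 1 / 2))
    (tstar : ℝ) (htstar : 0 < tstar)
    (hcollapse : lam₀ ^ 2 = 2 * ∫ s in (0 : ℝ)..tstar, atil s)
    (huniq : ∀ t' : ℝ, 0 < t' → lam₀ ^ 2 = 2 * ∫ s in (0 : ℝ)..t', atil s → t' = tstar)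
    (c C astar : ℝ) (hc : 0 < c) (hC : 0 ≤ C)
    (hastar : astar ∈ Icc ((n : ℝ) - 1 / 2) ((n : ℝ) + 1 / 2))
    (hdecay : ∀ t ∈ Ico (0 : ℝ) tstar,
      |atil t - astar| ≤
        C * Real.exp (-c * ∫ s in (0 : ℝ)..t,
          (Real.sqrt (lam₀ ^ 2 - 2 * ∫ u in (0 : ℝ)..s, atil u) ^ 2)⁻¹)) :
    ∃ C₂ : ℝ, ∀ t ∈ Ico (0 : ℝ) tstar,
      Real.exp (-c * ∫ s in (0 : ℝ)..t,
          (Real.sqrt (lam₀ ^ 2 - 2 * ∫ u in (0 : ℝ)..s, atil u) ^ 2)⁻¹) ≤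
        C₂ * (tstar - t) ^ (c / (2 * astar)) :=
  exp_decay_to_power_law_general n hn lam₀ atil hcont hrange tstar htstar hcollapse c C astar hc hC
    hastar hdecay
end

section
/- Let n ≥ 1, λ₀ > 0, and let ã : [0, ∞) → [n − 1/2, n + 1/2] be continuous; let t_* be the unique positive time with λ₀² = 2∫₀^{t_*} ã(s) ds, and set λ(t) := (λ₀² − 2∫₀^t ã(s) ds)^{1/2} and τ(t) := ∫₀^t λ(s)^{-2} ds for t ∈ [0, t_*). Assume there are constants c > 0, C ≥ 0 and a_* ∈ [n − 1/2, n + 1/2] with |ã(t) − a_*| ≤ C e^{−c τ(t)} for all t ∈ [0, t_*). Then there exists a constant C₁ such that |λ(t) − √(2a_*(t_* − t))| ≤ C₁ (t_* − t)^{1/2 + c/(2a_*)} for all t ∈ [0, t_*). In particular λ(t)²/(t_* − t) → 2a_* as t → t_*⁻. -/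
/-! Write `F = λ²`. The collapse condition gives `F t = 2 ∫_t^{t_*} ã`, so `F t` is comparable to
`t_* - t` and `τ(t) ≥ log (t_* / (t_* - t)) / (2n + 1)`. Through the decay hypothesis, `|ã - a_*|`
then decays like a power `(t_* - t)^γ`, which integrates to
`F t = 2 a_* (t_* - t) + O((t_* - t)^(1 + γ))`. Fed back into `τ = ∫ F⁻¹`, this sharpens the
lower bound to `τ(t) ≥ log (t_* / (t_* - t)) / (2 a_*) - K`, so a second pass gives the exponent
`γ = c / (2 a_*)`; taking square roots gives the claim. -/

open MeasureTheory Set Filter Real Topology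

theorem abs_sqrt_sub_sqrt_le {x y : ℝ} (hx : 0 ≤ x) (hy : 0 < y) :
    |√x - √y| ≤ |x - y| / √y := by
  rw [le_div_iff₀ (sqrt_pos.2 hy)]
  calc |√x - √y| * √y ≤ |√x - √y| * (√x + √y) := by gcongr; linarith [sqrt_nonneg x]
    _ = |x - y| := by
      rw [← abs_of_nonneg (add_nonneg (sqrt_nonneg x) (sqrt_nonneg y)), ← abs_mul]
      congr 1
      linear_combination sq_sqrt hx - sq_sqrt hy.le

theorem integral_sub_rpow {γ : ℝ} (hγ : -1 < γ) (u t T : ℝ) :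
    ∫ s in u..t, (T - s) ^ γ = ((T - u) ^ (γ + 1) - (T - t) ^ (γ + 1)) / (γ + 1) := by
  rw [intervalIntegral.integral_comp_sub_left (fun x => x ^ γ) T, integral_rpow (Or.inl hγ)]

theorem integral_sub_inv {u t T : ℝ} (hu : u < T) (ht : t < T) :
    ∫ s in u..t, (T - s)⁻¹ = log ((T - u) / (T - t)) := by
  rw [intervalIntegral.integral_comp_sub_left (fun x => x⁻¹) T, integral_inv]
  rw [mem_uIcc]
  rintro (h | h) <;> linarith [h.1, h.2]

theorem intervalIntegrable_sub_rpow {γ : ℝ} (hγ : -1 < γ) (u t T : ℝ) :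
    IntervalIntegrable (fun s => (T - s) ^ γ) volume u t := by
  simpa using
    (intervalIntegral.intervalIntegrable_rpow' hγ (a := T - u) (b := T - t)).comp_sub_left T

theorem intervalIntegrable_sub_inv {u t T : ℝ} (hu : u < T) (ht : t < T) :
    IntervalIntegrable (fun s => (T - s)⁻¹) volume u t := by
  refine ContinuousOn.intervalIntegrable (ContinuousOn.inv₀ (by fun_prop) ?_)
  intro s hs
  rw [mem_uIcc] at hs
  rcases hs with h | h <;> linarith [h.1, h.2]

theorem inv_sub_div_le_inv {x y ε b : ℝ} (hy : 0 < y) (hb : 0 < b) (hbx : b ≤ x)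
    (hxy : |x - y| ≤ ε) : y⁻¹ - ε / (y * b) ≤ x⁻¹ := by
  have hx : 0 < x := hb.trans_le hbx
  have hε : 0 ≤ ε := (abs_nonneg _).trans hxy
  have : y⁻¹ - x⁻¹ ≤ ε / (y * b) :=
    calc y⁻¹ - x⁻¹ = (x - y) / (y * x) := by field_simp
      _ ≤ ε / (y * x) := by gcongr; exact (le_abs_self _).trans hxy
      _ ≤ ε / (y * b) := by gcongr
  linarith

theorem mul_exp_neg_le_of_log_le {C c θ K τ x T : ℝ} (hC : 0 ≤ C) (hc : 0 ≤ c) (hx : 0 < x)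
    (hT : 0 < T) (hτ : θ * log (T / x) - K ≤ τ) :
    C * exp (-c * τ) ≤ C * exp (c * K) / T ^ (c * θ) * x ^ (c * θ) := by
  rw [rpow_def_of_pos hT, rpow_def_of_pos hx, mul_div_assoc, mul_assoc, ← exp_sub, ← exp_add]
  gcongr
  rw [log_div hT.ne' hx.ne'] at hτ
  nlinarith [mul_le_mul_of_nonneg_left hτ hc]

theorem abs_integral_sub_mul_le {a : ℝ → ℝ} {t T a₀ M γ : ℝ} (htT : t ≤ T) (hγ : -1 < γ)
    (ha : IntervalIntegrable a volume t T) (hbound : ∀ s ∈ Ioo t T, |a s - a₀| ≤ M * (T - s) ^ γ) :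
    |(∫ s in t..T, a s) - a₀ * (T - t)| ≤ M * (T - t) ^ (γ + 1) / (γ + 1) := by
  have hsub : (∫ s in t..T, a s) - a₀ * (T - t) = ∫ s in t..T, (a s - a₀) := by
    rw [intervalIntegral.integral_sub ha intervalIntegrable_const, intervalIntegral.integral_const,
      smul_eq_mul, mul_comm]
  calc |(∫ s in t..T, a s) - a₀ * (T - t)|
      ≤ ∫ s in t..T, |a s - a₀| := hsub ▸ intervalIntegral.abs_integral_le_integral_abs htT
    _ ≤ ∫ s in t..T, M * (T - s) ^ γ :=
      intervalIntegral.integral_mono_on_of_le_Ioo htT (ha.sub intervalIntegrable_const).abs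
        ((intervalIntegrable_sub_rpow hγ t T T).const_mul M) hbound
    _ = M * (T - t) ^ (γ + 1) / (γ + 1) := by
      rw [intervalIntegral.integral_const_mul, integral_sub_rpow hγ, sub_self,
        zero_rpow (by linarith : γ + 1 ≠ 0)]
      ring

theorem sub_le_integral_inv {f : ℝ → ℝ} {b K γ t T : ℝ} (hK : 0 ≤ K) (hγ : 0 < γ)
    (ht : t ∈ Ico 0 T) (hf : IntervalIntegrable (fun s => (f s)⁻¹) volume 0 t)
    (hbound : ∀ s ∈ Icc 0 t, (b * (T - s))⁻¹ - K * (T - s) ^ (γ - 1) ≤ (f s)⁻¹) :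
    b⁻¹ * log (T / (T - t)) - K * T ^ γ / γ ≤ ∫ s in 0..t, (f s)⁻¹ := by
  have hT : 0 < T := ht.1.trans_lt ht.2
  have hinv : IntervalIntegrable (fun s => b⁻¹ * (T - s)⁻¹) volume 0 t :=
    (intervalIntegrable_sub_inv hT ht.2).const_mul _
  have hpow : IntervalIntegrable (fun s => K * (T - s) ^ (γ - 1)) volume 0 t :=
    (intervalIntegrable_sub_rpow (by linarith) 0 t T).const_mul _
  simp_rw [mul_inv] at hbound
  calc b⁻¹ * log (T / (T - t)) - K * T ^ γ / γ
      ≤ b⁻¹ * log (T / (T - t)) - K * ((T ^ γ - (T - t) ^ γ) / γ) := by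
        have := rpow_nonneg (sub_nonneg.2 ht.2.le) γ
        rw [mul_div_assoc]
        gcongr
        linarith
    _ = ∫ s in 0..t, (b⁻¹ * (T - s)⁻¹ - K * (T - s) ^ (γ - 1)) := by
        rw [intervalIntegral.integral_sub hinv hpow, intervalIntegral.integral_const_mul,
          intervalIntegral.integral_const_mul, integral_sub_inv hT ht.2,
          integral_sub_rpow (by linarith), sub_zero, sub_add_cancel]
    _ ≤ ∫ s in 0..t, (f s)⁻¹ := intervalIntegral.integral_mono_on ht.1 (hinv.sub hpow) hf hbound

theorem mul_log_le_integral_inv {f : ℝ → ℝ} {b t T : ℝ} (ht : t ∈ Ico 0 T)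
    (hf : IntervalIntegrable (fun s => (f s)⁻¹) volume 0 t)
    (hbound : ∀ s ∈ Icc 0 t, 0 < f s ∧ f s ≤ b * (T - s)) :
    b⁻¹ * log (T / (T - t)) ≤ ∫ s in 0..t, (f s)⁻¹ := by
  simpa using sub_le_integral_inv (K := 0) (γ := 1) le_rfl one_pos ht hf fun s hs => by
    simpa using inv_anti₀ (hbound s hs).1 (hbound s hs).2

theorem integral_mem_Icc_of_mem_Icc {a : ℝ → ℝ} {t T m M : ℝ} (htT : t ≤ T)
    (ha : IntervalIntegrable a volume t T) (hrange : ∀ s ∈ Icc t T, a s ∈ Icc m M) :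
    ∫ s in t..T, a s ∈ Icc (m * (T - t)) (M * (T - t)) := by
  have hlow := intervalIntegral.integral_mono_on htT intervalIntegrable_const ha
    (fun s hs => (hrange s hs).1)
  have hupp := intervalIntegral.integral_mono_on htT ha intervalIntegrable_const
    (fun s hs => (hrange s hs).2)
  simp only [intervalIntegral.integral_const, smul_eq_mul] at hlow hupp
  exact ⟨by linarith, by linarith⟩

theorem sub_two_mul_integral_eq {a : ℝ → ℝ} {L T : ℝ} (ha : ContinuousOn a (Icc 0 T))
    (hL : L = 2 * ∫ s in 0..T, a s) :
    ∀ t ∈ Icc 0 T, L - 2 * ∫ s in 0..t, a s = 2 * ∫ s in t..T, a s := by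
  intro t ht
  have hsplit := intervalIntegral.integral_add_adjacent_intervals (μ := volume)
    ((ha.mono (Icc_subset_Icc_right ht.2)).intervalIntegrable_of_Icc ht.1)
    ((ha.mono (Icc_subset_Icc_left ht.1)).intervalIntegrable_of_Icc ht.2)
  linarith

section TailIntegral

variable {a F : ℝ → ℝ} {T : ℝ}

theorem mem_Icc_of_eq_two_mul_integral {m M : ℝ} (ha : ContinuousOn a (Icc 0 T))
    (hrange : ∀ s ∈ Icc 0 T, a s ∈ Icc m M) (hF : ∀ t ∈ Icc 0 T, F t = 2 * ∫ s in t..T, a s) :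
    ∀ t ∈ Icc 0 T, F t ∈ Icc (2 * m * (T - t)) (2 * M * (T - t)) := by
  intro t ht
  have hsub : Icc t T ⊆ Icc 0 T := Icc_subset_Icc_left ht.1
  have := integral_mem_Icc_of_mem_Icc ht.2
    ((ha.mono hsub).intervalIntegrable_of_Icc ht.2) (fun s hs => hrange s (hsub hs))
  rw [hF t ht]
  exact ⟨by linarith [this.1], by linarith [this.2]⟩

theorem pos_of_eq_two_mul_integral {m M : ℝ} (hm : 0 < m) (ha : ContinuousOn a (Icc 0 T))
    (hrange : ∀ s ∈ Icc 0 T, a s ∈ Icc m M) (hF : ∀ t ∈ Icc 0 T, F t = 2 * ∫ s in t..T, a s) :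
    ∀ t ∈ Ico 0 T, 0 < F t := fun t ht =>
  (mul_pos (by positivity) (sub_pos.2 ht.2)).trans_le
    (mem_Icc_of_eq_two_mul_integral ha hrange hF t (Ico_subset_Icc_self ht)).1

theorem intervalIntegrable_inv_of_eq_two_mul_integral (ha : ContinuousOn a (Icc 0 T))
    (hF : ∀ t ∈ Icc 0 T, F t = 2 * ∫ s in t..T, a s) (hpos : ∀ t ∈ Ico 0 T, 0 < F t) :
    ∀ t ∈ Ico 0 T, IntervalIntegrable (fun s => (F s)⁻¹) volume 0 t := by
  intro t ht
  have h0T : (0 : ℝ) ≤ T := ht.1.trans ht.2.le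
  have hprim : ContinuousOn (fun t => 2 * ∫ s in t..T, a s) (Icc 0 T) := by
    have := intervalIntegral.continuousOn_primitive_interval_left (μ := volume)
      (uIcc_of_le h0T ▸ ha.integrableOn_Icc)
    exact continuousOn_const.mul (uIcc_of_le h0T ▸ this)
  have hsub : Icc 0 t ⊆ Icc 0 T := Icc_subset_Icc_right ht.2.le
  refine ((hprim.congr hF).mono hsub).inv₀ (fun s hs => (hpos s ⟨hs.1, hs.2.trans_lt ht.2⟩).ne')
    |>.intervalIntegrable_of_Icc ht.1

theorem abs_sub_le_rpow_of_abs_sub_le {a₀ M γ : ℝ} (hγ : -1 < γ) (ha : ContinuousOn a (Icc 0 T))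
    (hF : ∀ t ∈ Icc 0 T, F t = 2 * ∫ s in t..T, a s)
    (hbound : ∀ s ∈ Ico 0 T, |a s - a₀| ≤ M * (T - s) ^ γ) :
    ∀ t ∈ Icc 0 T, |F t - 2 * a₀ * (T - t)| ≤ 2 * M / (γ + 1) * (T - t) ^ (γ + 1) := by
  intro t ht
  have := abs_integral_sub_mul_le ht.2 hγ
    ((ha.mono (Icc_subset_Icc_left ht.1)).intervalIntegrable_of_Icc ht.2)
    (fun s hs => hbound s ⟨ht.1.trans hs.1.le, hs.2⟩)
  rw [hF t ht, show 2 * (∫ s in t..T, a s) - 2 * a₀ * (T - t)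
    = 2 * ((∫ s in t..T, a s) - a₀ * (T - t)) by ring, abs_mul, abs_two]
  calc 2 * |(∫ s in t..T, a s) - a₀ * (T - t)| ≤ 2 * (M * (T - t) ^ (γ + 1) / (γ + 1)) := by
        gcongr
    _ = 2 * M / (γ + 1) * (T - t) ^ (γ + 1) := by ring

theorem exists_abs_sub_le_rpow_of_sub_le_integral_inv {a₀ c C θ K : ℝ} (hT : 0 < T)
    (hc : 0 ≤ c) (hC : 0 ≤ C) (hθ : 0 ≤ θ) (ha : ContinuousOn a (Icc 0 T))
    (hF : ∀ t ∈ Icc 0 T, F t = 2 * ∫ s in t..T, a s)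
    (hdecay : ∀ t ∈ Ico 0 T, |a t - a₀| ≤ C * exp (-c * ∫ s in 0..t, (F s)⁻¹))
    (hτ : ∀ t ∈ Ico 0 T, θ * log (T / (T - t)) - K ≤ ∫ s in 0..t, (F s)⁻¹) :
    ∃ E, 0 ≤ E ∧ ∀ t ∈ Ico 0 T, |F t - 2 * a₀ * (T - t)| ≤ E * (T - t) ^ (c * θ + 1) := by
  have hcθ : 0 ≤ c * θ := mul_nonneg hc hθ
  refine ⟨2 * (C * exp (c * K) / T ^ (c * θ)) / (c * θ + 1), by positivity, fun t ht => ?_⟩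
  refine abs_sub_le_rpow_of_abs_sub_le (by linarith) ha hF (fun s hs => ?_) t
    (Ico_subset_Icc_self ht)
  exact (hdecay s hs).trans (mul_exp_neg_le_of_log_le hC hc (sub_pos.2 hs.2) hT (hτ s hs))

theorem exists_sub_le_integral_inv_of_abs_sub_le {a₀ m E γ : ℝ} (hm : 0 < m) (ha₀ : 0 < a₀)
    (hγ : 0 < γ) (hE : 0 ≤ E) (hlow : ∀ t ∈ Ico 0 T, 2 * m * (T - t) ≤ F t)
    (hint : ∀ t ∈ Ico 0 T, IntervalIntegrable (fun s => (F s)⁻¹) volume 0 t)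
    (hFE : ∀ t ∈ Ico 0 T, |F t - 2 * a₀ * (T - t)| ≤ E * (T - t) ^ (γ + 1)) :
    ∃ K, ∀ t ∈ Ico 0 T, (2 * a₀)⁻¹ * log (T / (T - t)) - K ≤ ∫ s in 0..t, (F s)⁻¹ := by
  refine ⟨E / (2 * a₀ * (2 * m)) * T ^ γ / γ, fun t ht => ?_⟩
  refine sub_le_integral_inv (by positivity) hγ ht (hint t ht) fun s hs => ?_
  have hs' : s ∈ Ico 0 T := ⟨hs.1, hs.2.trans_lt ht.2⟩
  have hy : 0 < T - s := sub_pos.2 hs'.2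
  have key := inv_sub_div_le_inv (by positivity) (by positivity) (hlow s hs') (hFE s hs')
  convert key using 2
  rw [show γ + 1 = (γ - 1) + 1 + 1 by ring, rpow_add hy, rpow_add hy, rpow_one]
  field_simp

theorem exists_abs_sub_le_rpow_of_decay {m M a₀ c C : ℝ} (hT : 0 < T) (hm : 0 < m)
    (ha₀ : 0 < a₀) (hc : 0 < c) (hC : 0 ≤ C) (ha : ContinuousOn a (Icc 0 T))
    (hrange : ∀ s ∈ Icc 0 T, a s ∈ Icc m M) (hF : ∀ t ∈ Icc 0 T, F t = 2 * ∫ s in t..T, a s)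
    (hdecay : ∀ t ∈ Ico 0 T, |a t - a₀| ≤ C * exp (-c * ∫ s in 0..t, (F s)⁻¹)) :
    ∃ E, ∀ t ∈ Ico 0 T, |F t - 2 * a₀ * (T - t)| ≤ E * (T - t) ^ (c / (2 * a₀) + 1) := by
  have hM : 0 < M := hm.trans_le ((hrange 0 ⟨le_rfl, hT.le⟩).1.trans (hrange 0 ⟨le_rfl, hT.le⟩).2)
  have hFmem := mem_Icc_of_eq_two_mul_integral ha hrange hF
  have hFpos := pos_of_eq_two_mul_integral hm ha hrange hF
  have hint := intervalIntegrable_inv_of_eq_two_mul_integral ha hF hFpos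
  have hτ₀ : ∀ t ∈ Ico 0 T, (2 * M)⁻¹ * log (T / (T - t)) - 0 ≤ ∫ s in 0..t, (F s)⁻¹ := by
    intro t ht
    refine (sub_zero _).trans_le (mul_log_le_integral_inv ht (hint t ht) fun s hs => ?_)
    have hs' : s ∈ Ico 0 T := ⟨hs.1, hs.2.trans_lt ht.2⟩
    exact ⟨hFpos s hs', (hFmem s (Ico_subset_Icc_self hs')).2⟩
  obtain ⟨E₀, hE₀, h₀⟩ := exists_abs_sub_le_rpow_of_sub_le_integral_inv hT hc.le hC
    (by positivity) ha hF hdecay hτ₀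
  obtain ⟨K, hK⟩ := exists_sub_le_integral_inv_of_abs_sub_le hm ha₀ (by positivity) hE₀
    (fun t ht => (hFmem t (Ico_subset_Icc_self ht)).1) hint h₀
  obtain ⟨E, -, h⟩ := exists_abs_sub_le_rpow_of_sub_le_integral_inv hT hc.le hC
    (by positivity) ha hF hdecay hK
  exact ⟨E, by simpa only [← div_eq_mul_inv] using h⟩

end TailIntegral

theorem abs_sqrt_sub_sqrt_mul_le {x b y E α : ℝ} (hx : 0 ≤ x) (hb : 0 < b) (hy : 0 < y)
    (h : |x - b * y| ≤ E * y ^ (α + 1)) : |√x - √(b * y)| ≤ E / √b * y ^ (1 / 2 + α) := by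
  have hby : 0 < b * y := mul_pos hb hy
  calc |√x - √(b * y)| ≤ |x - b * y| / √(b * y) := abs_sqrt_sub_sqrt_le hx hby
    _ ≤ E * y ^ (α + 1) / √(b * y) := by gcongr
    _ = E / √b * y ^ (1 / 2 + α) := by
      rw [sqrt_mul hb.le, sqrt_eq_rpow y, show α + 1 = 1 / 2 + α + 1 / 2 by ring, rpow_add hy]
      have := sqrt_pos.2 hb
      have := rpow_pos_of_pos hy (1 / 2)
      field_simp

theorem tendsto_div_sub_of_abs_sub_le {F : ℝ → ℝ} {T b E α : ℝ} (hα : 0 < α)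
    (h : ∀ᶠ t in 𝓝[<] T, |F t - b * (T - t)| ≤ E * (T - t) ^ (α + 1)) :
    Tendsto (fun t => F t / (T - t)) (𝓝[<] T) (𝓝 b) := by
  have hbound : Tendsto (fun t => E * (T - t) ^ α) (𝓝[<] T) (𝓝 0) := by
    have hcont : Continuous (fun t => E * (T - t) ^ α) :=
      continuous_const.mul ((continuous_const.sub continuous_id).rpow_const fun _ => Or.inr hα.le)
    simpa [zero_rpow hα.ne'] using (hcont.tendsto T).mono_left nhdsWithin_le_nhds
  refine tendsto_sub_nhds_zero_iff.1 (squeeze_zero_norm' ?_ hbound)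
  filter_upwards [h, self_mem_nhdsWithin] with t ht htT
  have hy : 0 < T - t := sub_pos.2 htT
  rw [norm_eq_abs, div_sub' hy.ne', abs_div, abs_of_pos hy, div_le_iff₀ hy]
  calc |F t - (T - t) * b| = |F t - b * (T - t)| := by rw [mul_comm]
    _ ≤ E * (T - t) ^ (α + 1) := ht
    _ = E * (T - t) ^ α * (T - t) := by rw [rpow_add_one hy.ne']; ring

theorem scaling_parameter_asymptotics_general (n : ℕ) (hn : 1 ≤ n) (lam₀ : ℝ)
    (atil : ℝ → ℝ) (hcont : ContinuousOn atil (Ici 0))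
    (hrange : ∀ t ∈ Ici (0 : ℝ), atil t ∈ Icc ((n : ℝ) - 1 / 2) ((n : ℝ) + 1 / 2))
    (tstar : ℝ) (htstar : 0 < tstar)
    (hcollapse : lam₀ ^ 2 = 2 * ∫ s in (0 : ℝ)..tstar, atil s)
    (c C astar : ℝ) (hc : 0 < c) (hC : 0 ≤ C)
    (hastar : astar ∈ Icc ((n : ℝ) - 1 / 2) ((n : ℝ) + 1 / 2))
    (hdecay : ∀ t ∈ Ico (0 : ℝ) tstar,
      |atil t - astar| ≤
        C * Real.exp (-c * ∫ s in (0 : ℝ)..t,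
          (Real.sqrt (lam₀ ^ 2 - 2 * ∫ u in (0 : ℝ)..s, atil u) ^ 2)⁻¹)) :
    (∃ C₁ : ℝ, ∀ t ∈ Ico (0 : ℝ) tstar,
      |Real.sqrt (lam₀ ^ 2 - 2 * ∫ s in (0 : ℝ)..t, atil s) -
          Real.sqrt (2 * astar * (tstar - t))| ≤
        C₁ * (tstar - t) ^ (1 / 2 + c / (2 * astar))) ∧
    Tendsto
      (fun t => Real.sqrt (lam₀ ^ 2 - 2 * ∫ s in (0 : ℝ)..t, atil s) ^ 2 / (tstar - t))
      (nhdsWithin tstar (Iio tstar)) (nhds (2 * astar)) := by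
  have hm : (0 : ℝ) < n - 1 / 2 := by
    have : (1 : ℝ) ≤ n := by exact_mod_cast hn
    linarith
  have ha : ContinuousOn atil (Icc 0 tstar) := hcont.mono Icc_subset_Ici_self
  have hrange' : ∀ s ∈ Icc 0 tstar, atil s ∈ Icc ((n : ℝ) - 1 / 2) ((n : ℝ) + 1 / 2) :=
    fun s hs => hrange s hs.1
  set F : ℝ → ℝ := fun t => lam₀ ^ 2 - 2 * ∫ s in (0 : ℝ)..t, atil s
  have hF : ∀ t ∈ Icc 0 tstar, F t = 2 * ∫ s in t..tstar, atil s :=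
    sub_two_mul_integral_eq ha hcollapse
  have hFpos := pos_of_eq_two_mul_integral hm ha hrange' hF
  have hdecay' : ∀ t ∈ Ico 0 tstar, |atil t - astar| ≤ C * exp (-c * ∫ s in 0..t, (F s)⁻¹) := by
    intro t ht
    refine (hdecay t ht).trans_eq ?_
    congr 3
    refine intervalIntegral.integral_congr fun s hs => ?_
    rw [uIcc_of_le ht.1] at hs
    rw [sq_sqrt (hFpos s ⟨hs.1, hs.2.trans_lt ht.2⟩).le]
  obtain ⟨E, h⟩ := exists_abs_sub_le_rpow_of_decay htstar hm (hm.trans_le hastar.1) hc hC ha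
    hrange' hF hdecay'
  refine ⟨⟨E / √(2 * astar), fun t ht => abs_sqrt_sub_sqrt_mul_le (hFpos t ht).le
    (by linarith [hastar.1]) (sub_pos.2 ht.2) (h t ht)⟩, ?_⟩
  refine (tendsto_div_sub_of_abs_sub_le (div_pos hc (by linarith [hastar.1]))
    (mem_of_superset (Ico_mem_nhdsLT htstar) h)).congr' ?_
  filter_upwards [Ico_mem_nhdsLT htstar] with t ht
  rw [sq_sqrt (hFpos t ht).le]

/-- the asymptotic law `λ(t) = √(2a_*(t_* − t)) + O((t_*−t)^{1/2+c/(2a_*)})`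
for the collapsing scaling parameter, where `λ(t) = (λ₀² − 2∫₀^t ã)^{1/2}`,
`τ(t) = ∫₀^t λ(s)^{-2} ds` and `|ã(t) − a_*| ≤ C e^{−c τ(t)}` on `[0, t_*)`.
In particular `λ(t)²/(t_* − t) → 2a_*` as `t → t_*⁻`. -/
theorem scaling_parameter_asymptotics (n : ℕ) (hn : 1 ≤ n) (lam₀ : ℝ) (hlam₀ : 0 < lam₀)
    (atil : ℝ → ℝ) (hcont : ContinuousOn atil (Ici 0))
    (hrange : ∀ t ∈ Ici (0 : ℝ), atil t ∈ Icc ((n : ℝ) - 1 / 2) ((n : ℝ) + 1 / 2))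
    (tstar : ℝ) (htstar : 0 < tstar)
    (hcollapse : lam₀ ^ 2 = 2 * ∫ s in (0 : ℝ)..tstar, atil s)
    (huniq : ∀ t' : ℝ, 0 < t' → lam₀ ^ 2 = 2 * ∫ s in (0 : ℝ)..t', atil s → t' = tstar)
    (c C astar : ℝ) (hc : 0 < c) (hC : 0 ≤ C)
    (hastar : astar ∈ Icc ((n : ℝ) - 1 / 2) ((n : ℝ) + 1 / 2))
    (hdecay : ∀ t ∈ Ico (0 : ℝ) tstar,
      |atil t - astar| ≤
        C * Real.exp (-c * ∫ s in (0 : ℝ)..t,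
          (Real.sqrt (lam₀ ^ 2 - 2 * ∫ u in (0 : ℝ)..s, atil u) ^ 2)⁻¹)) :
    (∃ C₁ : ℝ, ∀ t ∈ Ico (0 : ℝ) tstar,
      |Real.sqrt (lam₀ ^ 2 - 2 * ∫ s in (0 : ℝ)..t, atil s) -
          Real.sqrt (2 * astar * (tstar - t))| ≤
        C₁ * (tstar - t) ^ (1 / 2 + c / (2 * astar))) ∧
    Tendsto
      (fun t => Real.sqrt (lam₀ ^ 2 - 2 * ∫ s in (0 : ℝ)..t, atil s) ^ 2 / (tstar - t))
      (nhdsWithin tstar (Iio tstar)) (nhds (2 * astar)) :=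
  scaling_parameter_asymptotics_general n hn lam₀ atil hcont hrange tstar htstar hcollapse c C astar
    hc hC hastar hdecay
end

section
/- Let n ≥ 1, R > 0, ω ∈ S^n, and z ∈ ℝ^{n+1} with |z| ≤ R/2. With ρ(R, z) := z·ω + √(R² − |z|² + (z·ω)²), the derivative formulas ∂_R ρ = R/(ρ − z·ω) and ∂_{z_j} ρ = (ρ ω_j − z_j)/(ρ − z·ω) satisfy the estimates |∂_R ρ − 1| ≤ 3|z|/R and |∂_{z_j} ρ − ω_j| ≤ 3|z|/R for every j = 1,…,n+1. -/
open Metric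

open scoped RealInnerProductSpace

/-! With `s = z·ω` and `A = ρ - z·ω = √(R² - |z|² + s²)`, both tangent vectors differ from the
eigenfunctions by a quotient with denominator `A`: `∂_R ρ - 1 = (R - A) / A` and
`∂_{z_j} ρ - ω_j = (s ω_j - z_j) / A`. Since `|s| ≤ |z| ≤ R/2`, `A` is pinched between
`√(R² - |z|²) ≥ 2R/3` and `R`, while `R - A ≤ |z|² / R` and `|s ω_j - z_j| ≤ 2|z|`. -/

section RealBounds

variable {R r A : ℝ}

lemma two_mul_le_three_mul_of_sq_sub_sq_le (hA : 0 ≤ A) (hr₀ : 0 ≤ r) (hr : r ≤ R / 2)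
    (hRA : R ^ 2 - r ^ 2 ≤ A ^ 2) : 2 * R ≤ 3 * A := by
  nlinarith

lemma abs_div_sub_one_le_of_sq_sub_sq_le (hR : 0 < R) (hA : 0 ≤ A) (hr₀ : 0 ≤ r)
    (hr : r ≤ R / 2) (hRA : R ^ 2 - r ^ 2 ≤ A ^ 2) (hAR : A ≤ R) :
    |R / A - 1| ≤ 3 * r / R := by
  have hA₀ : 0 < A := by linarith [two_mul_le_three_mul_of_sq_sub_sq_le hA hr₀ hr hRA]
  rw [abs_of_nonneg (by rw [sub_nonneg, le_div_iff₀ hA₀]; linarith),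
    div_sub_one hA₀.ne', div_le_div_iff₀ hA₀ hR]
  nlinarith

lemma abs_div_le_of_sq_sub_sq_le {b : ℝ} (hR : 0 < R) (hA : 0 ≤ A) (hr₀ : 0 ≤ r)
    (hr : r ≤ R / 2) (hRA : R ^ 2 - r ^ 2 ≤ A ^ 2) (hb : |b| ≤ 2 * r) :
    |b / A| ≤ 3 * r / R := by
  have h3A := two_mul_le_three_mul_of_sq_sub_sq_le hA hr₀ hr hRA
  have hA₀ : 0 < A := by linarith
  rw [abs_div, abs_of_pos hA₀, div_le_div_iff₀ hA₀ hR]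
  nlinarith

lemma mul_sub_div_sub_sub_eq {ρ s w c : ℝ} (h : ρ - s ≠ 0) :
    (ρ * w - c) / (ρ - s) - w = (s * w - c) / (ρ - s) := by
  field_simp
  ring

end RealBounds

section RadialGraph

variable {E : Type*} [NormedAddCommGroup E] [InnerProductSpace ℝ E]

noncomputable def radialGraph (R : ℝ) (z ω : E) : ℝ :=
  ⟪z, ω⟫ + √(R ^ 2 - ‖z‖ ^ 2 + ⟪z, ω⟫ ^ 2)

lemma radialGraph_sub_inner (R : ℝ) (z ω : E) :
    radialGraph R z ω - ⟪z, ω⟫ = √(R ^ 2 - ‖z‖ ^ 2 + ⟪z, ω⟫ ^ 2) :=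
  add_sub_cancel_left _ _

lemma radialGraph_sub_inner_nonneg (R : ℝ) (z ω : E) : 0 ≤ radialGraph R z ω - ⟪z, ω⟫ := by
  rw [radialGraph_sub_inner]
  exact Real.sqrt_nonneg _

lemma sq_sub_sq_le_sq_radialGraph_sub_inner (R : ℝ) (z ω : E) :
    R ^ 2 - ‖z‖ ^ 2 ≤ (radialGraph R z ω - ⟪z, ω⟫) ^ 2 := by
  rw [radialGraph_sub_inner, Real.sq_sqrt']
  exact le_max_of_le_left (le_add_of_nonneg_right (sq_nonneg _))

lemma abs_inner_le_norm_of_norm_eq_one (z : E) {ω : E} (hω : ‖ω‖ = 1) : |⟪z, ω⟫| ≤ ‖z‖ := by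
  simpa [hω] using abs_real_inner_le_norm z ω

lemma radialGraph_sub_inner_le {R : ℝ} (hR : 0 ≤ R) (z : E) {ω : E} (hω : ‖ω‖ = 1) :
    radialGraph R z ω - ⟪z, ω⟫ ≤ R := by
  have hs : ⟪z, ω⟫ ^ 2 ≤ ‖z‖ ^ 2 :=
    sq_le_sq.mpr ((abs_inner_le_norm_of_norm_eq_one z hω).trans (le_abs_self _))
  rw [radialGraph_sub_inner, Real.sqrt_le_left hR]
  linarith

end RadialGraph

lemma abs_inner_mul_apply_sub_apply_le {m : ℕ} (z : EuclideanSpace ℝ (Fin m))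
    {ω : EuclideanSpace ℝ (Fin m)} (hω : ‖ω‖ = 1) (j : Fin m) :
    |⟪z, ω⟫ * ω j - z j| ≤ 2 * ‖z‖ := by
  have hωj : |ω j| ≤ 1 := hω ▸ PiLp.norm_apply_le ω j
  have hzj : |z j| ≤ ‖z‖ := PiLp.norm_apply_le z j
  have hs := abs_inner_le_norm_of_norm_eq_one z hω
  calc |⟪z, ω⟫ * ω j - z j| ≤ |⟪z, ω⟫| * |ω j| + |z j| := by
        rw [← abs_mul]; exact abs_sub _ _
    _ ≤ ‖z‖ * 1 + ‖z‖ := by gcongr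
    _ = 2 * ‖z‖ := by ring

theorem radial_graph_zero_modes_estimate_general (n : ℕ) (R : ℝ) (hR : 0 < R)
    (ω : sphere (0 : EuclideanSpace ℝ (Fin (n + 1))) 1)
    (z : EuclideanSpace ℝ (Fin (n + 1))) (hz : ‖z‖ ≤ R / 2) :
    |R / (((inner ℝ z (ω : EuclideanSpace ℝ (Fin (n + 1))) : ℝ) +
          Real.sqrt (R ^ 2 - ‖z‖ ^ 2 +
            (inner ℝ z (ω : EuclideanSpace ℝ (Fin (n + 1))) : ℝ) ^ 2)) -
        (inner ℝ z (ω : EuclideanSpace ℝ (Fin (n + 1))) : ℝ)) - 1| ≤ 3 * ‖z‖ / R ∧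
    ∀ j : Fin (n + 1),
      |(((inner ℝ z (ω : EuclideanSpace ℝ (Fin (n + 1))) : ℝ) +
            Real.sqrt (R ^ 2 - ‖z‖ ^ 2 +
              (inner ℝ z (ω : EuclideanSpace ℝ (Fin (n + 1))) : ℝ) ^ 2)) *
          (ω : EuclideanSpace ℝ (Fin (n + 1))) j - z j) /
        (((inner ℝ z (ω : EuclideanSpace ℝ (Fin (n + 1))) : ℝ) +
            Real.sqrt (R ^ 2 - ‖z‖ ^ 2 +
              (inner ℝ z (ω : EuclideanSpace ℝ (Fin (n + 1))) : ℝ) ^ 2)) -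
          (inner ℝ z (ω : EuclideanSpace ℝ (Fin (n + 1))) : ℝ)) -
        (ω : EuclideanSpace ℝ (Fin (n + 1))) j| ≤ 3 * ‖z‖ / R := by
  obtain ⟨ω, hω⟩ := ω
  rw [mem_sphere_zero_iff_norm] at hω
  change |R / (radialGraph R z ω - ⟪z, ω⟫) - 1| ≤ 3 * ‖z‖ / R ∧ ∀ j,
    |(radialGraph R z ω * ω j - z j) / (radialGraph R z ω - ⟪z, ω⟫) - ω j| ≤ 3 * ‖z‖ / R
  have hA := sq_sub_sq_le_sq_radialGraph_sub_inner R z ω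
  have hA₀ := radialGraph_sub_inner_nonneg R z ω
  refine ⟨abs_div_sub_one_le_of_sq_sub_sq_le hR hA₀ (norm_nonneg z) hz hA
    (radialGraph_sub_inner_le hR.le z hω), fun j => ?_⟩
  have h3A := two_mul_le_three_mul_of_sq_sub_sq_le hA₀ (norm_nonneg z) hz hA
  rw [mul_sub_div_sub_sub_eq (by linarith : 0 < radialGraph R z ω - ⟪z, ω⟫).ne']
  exact abs_div_le_of_sq_sub_sq_le hR hA₀ (norm_nonneg z) hz hA
    (abs_inner_mul_apply_sub_apply_le z hω j)

/-- for `|z| ≤ R/2`, with `ρ = z·ω + √(R² − |z|² + (z·ω)²)`, the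
zero-mode tangent vectors `∂_R ρ = R/(ρ − z·ω)` and
`∂_{z_j} ρ = (ρ ω_j − z_j)/(ρ − z·ω)` satisfy `|∂_R ρ − 1| ≤ 3|z|/R` and
`|∂_{z_j} ρ − ω_j| ≤ 3|z|/R`. -/
theorem radial_graph_zero_modes_estimate (n : ℕ) (hn : 1 ≤ n) (R : ℝ) (hR : 0 < R)
    (ω : sphere (0 : EuclideanSpace ℝ (Fin (n + 1))) 1)
    (z : EuclideanSpace ℝ (Fin (n + 1))) (hz : ‖z‖ ≤ R / 2) :
    |R / (((inner ℝ z (ω : EuclideanSpace ℝ (Fin (n + 1))) : ℝ) +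
          Real.sqrt (R ^ 2 - ‖z‖ ^ 2 +
            (inner ℝ z (ω : EuclideanSpace ℝ (Fin (n + 1))) : ℝ) ^ 2)) -
        (inner ℝ z (ω : EuclideanSpace ℝ (Fin (n + 1))) : ℝ)) - 1| ≤ 3 * ‖z‖ / R ∧
    ∀ j : Fin (n + 1),
      |(((inner ℝ z (ω : EuclideanSpace ℝ (Fin (n + 1))) : ℝ) +
            Real.sqrt (R ^ 2 - ‖z‖ ^ 2 +
              (inner ℝ z (ω : EuclideanSpace ℝ (Fin (n + 1))) : ℝ) ^ 2)) *
          (ω : EuclideanSpace ℝ (Fin (n + 1))) j - z j) /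
        (((inner ℝ z (ω : EuclideanSpace ℝ (Fin (n + 1))) : ℝ) +
            Real.sqrt (R ^ 2 - ‖z‖ ^ 2 +
              (inner ℝ z (ω : EuclideanSpace ℝ (Fin (n + 1))) : ℝ) ^ 2)) -
          (inner ℝ z (ω : EuclideanSpace ℝ (Fin (n + 1))) : ℝ)) -
        (ω : EuclideanSpace ℝ (Fin (n + 1))) j| ≤ 3 * ‖z‖ / R :=
  radial_graph_zero_modes_estimate_general n R hR ω z hz
end
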